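/- Let π ∈ (0,1]^n be a normalized possibility distribution, σ a sorting permutation, π̃_r := π_{σ(r)} (convention π̃_{n+1} := 0), A_r := {σ(1),…,σ(r)}, ġ_r := (π̃_r − π̃_{r+1})/r, and ṗ the antipignistic probability vector ṗ_{σ(r)} := Σ_{j=r}^n (π̃_j − π̃_{j+1})/j. Suppose the gap parameters (δ̲_r, δ̄_r)_{r=1}^{n−1} satisfy: δ̲_r = δ̄_r = 0 whenever π̃_r = π̃_{r+1}, and 0 < δ̲_r ≤ ġ_r ≤ δ̄_r < 1 whenever π̃_r > π̃_{r+1}. Then ṗ belongs to F^box ∩ ℝ^n_{++}, where F^box := {p ∈ Δ_n : Σ_{k∈A_r} p_k ≥ 1 − π̃_{r+1} and δ̲_r ≤ p_{σ(r)} − p_{σ(r+1)} ≤ δ̄_r for all r = 1,…,n−1}. In particular F^box is nonempty. -/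

import Mathlib

open Finset

/-! The antipignistic vector is a tail sum of the nonnegative increments
`g_j = (π̃_j − π̃_{j+1})/j`: `ṗ_{σ(r)} = Σ_{j ≥ r} g_j`. Consecutive differences are therefore
exactly `ġ_r`, which the hypotheses place in `[δ̲_r, δ̄_r]`. Exchanging the order of summation,
the mass of the positions `r, …, n` is `Σ_{j ≥ r} (j − r + 1) g_j ≤ Σ_{j ≥ r} j g_j = π̃_r`,
which is the dominance constraint; for `r = 1` it is an equality and gives total mass `π̃_1 = 1`.
Every coordinate is at least `g_n = π̃_n / n > 0`. -/

/-- The admissible set `F^box` induced by a possibility distribution `π` on `Fin n`,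
a sorting permutation `σ` and gap parameters `δlo, δhi` (0-based sorted positions):
probability vectors satisfying the dominance constraints
`∑_{i < r} p(σ i) ≥ 1 − π(σ r)` for `1 ≤ r ≤ n−1` and the shape constraints
`δlo r ≤ p(σ r) − p(σ (r+1)) ≤ δhi r` for `r + 1 < n`. -/
def Fbox (n : ℕ) (π : Fin n → ℝ) (σ : Equiv.Perm (Fin n)) (δlo δhi : ℕ → ℝ) :
    Set (Fin n → ℝ) :=
  {p | (∀ i, 0 ≤ p i) ∧ (∑ i, p i = 1) ∧
    (∀ r : Fin n, 1 ≤ (r : ℕ) →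
      1 - π (σ r) ≤ ∑ i ∈ univ.filter (fun i : Fin n => (i : ℕ) < (r : ℕ)), p (σ i)) ∧
    (∀ (r : ℕ) (hr : r + 1 < n),
      δlo r ≤ p (σ ⟨r, Nat.lt_of_succ_lt hr⟩) - p (σ ⟨r + 1, hr⟩) ∧
      p (σ ⟨r, Nat.lt_of_succ_lt hr⟩) - p (σ ⟨r + 1, hr⟩) ≤ δhi r)}

section Antipignistic

/-- `antipignistic t n r` is the paper's `ṗ_{σ(r+1)}`: positions are 0-based and `t n` plays
the role of `π̃_{n+1} = 0`. -/
noncomputable def antipignistic (t : ℕ → ℝ) (n r : ℕ) : ℝ :=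
  ∑ j ∈ Ico r n, (t j - t (j + 1)) / ((j : ℝ) + 1)

variable {t : ℕ → ℝ} {n : ℕ}

theorem sum_Ico_sub_succ (t : ℕ → ℝ) {a b : ℕ} (hab : a ≤ b) :
    ∑ j ∈ Ico a b, (t j - t (j + 1)) = t a - t b := by
  have := sum_Ico_sub t hab
  rw [← neg_sub, ← this, ← sum_neg_distrib]
  simp only [neg_sub]

theorem antipignistic_sub_succ {r : ℕ} (hr : r < n) :
    antipignistic t n r - antipignistic t n (r + 1) = (t r - t (r + 1)) / ((r : ℝ) + 1) := by
  rw [antipignistic, sum_eq_sum_Ico_succ_bot hr, antipignistic, add_sub_cancel_right]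

theorem sum_Ico_antipignistic (t : ℕ → ℝ) (a n : ℕ) :
    ∑ i ∈ Ico a n, antipignistic t n i =
      ∑ j ∈ Ico a n, ((j + 1 - a : ℕ) : ℝ) * ((t j - t (j + 1)) / ((j : ℝ) + 1)) := by
  simp only [antipignistic]
  rw [sum_Ico_Ico_comm]
  refine sum_congr rfl fun j _ => ?_
  rw [sum_const, Nat.card_Ico, nsmul_eq_mul]

theorem sum_range_antipignistic (t : ℕ → ℝ) (n : ℕ) :
    ∑ i ∈ range n, antipignistic t n i = t 0 - t n := by
  rw [range_eq_Ico, sum_Ico_antipignistic, ← sum_Ico_sub_succ t (Nat.zero_le n)]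
  refine sum_congr rfl fun j _ => ?_
  push_cast
  field_simp

variable (hmono : ∀ j < n, t (j + 1) ≤ t j)
include hmono

theorem antipignistic_increment_nonneg {j : ℕ} (hj : j < n) :
    0 ≤ (t j - t (j + 1)) / ((j : ℝ) + 1) :=
  div_nonneg (sub_nonneg.2 (hmono j hj)) (by positivity)

theorem sum_Ico_antipignistic_le {a : ℕ} (ha : a ≤ n) :
    ∑ i ∈ Ico a n, antipignistic t n i ≤ t a - t n := by
  rw [sum_Ico_antipignistic, ← sum_Ico_sub_succ t ha]
  refine sum_le_sum fun j hj => ?_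
  have hjn := (mem_Ico.1 hj).2
  calc ((j + 1 - a : ℕ) : ℝ) * ((t j - t (j + 1)) / ((j : ℝ) + 1))
      ≤ ((j : ℝ) + 1) * ((t j - t (j + 1)) / ((j : ℝ) + 1)) := by
        gcongr
        · exact antipignistic_increment_nonneg hmono hjn
        · exact_mod_cast Nat.sub_le (j + 1) a
    _ = t j - t (j + 1) := by field_simp

theorem sub_le_sum_range_antipignistic {r : ℕ} (hr : r ≤ n) :
    t 0 - t r ≤ ∑ i ∈ range r, antipignistic t n i := by
  have hsplit := sum_range_add_sum_Ico (antipignistic t n) hr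
  rw [sum_range_antipignistic] at hsplit
  linarith [sum_Ico_antipignistic_le hmono hr]

theorem antipignistic_pos (hlast : t n < t (n - 1)) {r : ℕ} (hr : r < n) :
    0 < antipignistic t n r := by
  refine sum_pos' (fun j hj => antipignistic_increment_nonneg hmono (mem_Ico.1 hj).2)
    ⟨n - 1, mem_Ico.2 ⟨by omega, by omega⟩, ?_⟩
  rw [Nat.sub_add_cancel (by omega : 1 ≤ n)]
  exact div_pos (sub_pos.2 hlast) (by positivity)

end Antipignistic

theorem sum_univ_filter_val_lt {M : Type*} [AddCommMonoid M] (f : ℕ → M) {n r : ℕ}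
    (hr : r ≤ n) :
    ∑ i ∈ univ.filter (fun i : Fin n => (i : ℕ) < r), f i = ∑ i ∈ range r, f i := by
  rw [sum_filter, Fin.sum_univ_eq_sum_range (fun i => if i < r then f i else 0), ← sum_filter]
  congr 1
  ext i
  simp only [mem_filter, mem_range]
  omega

theorem sub_div_bounds_of_cases {a b c lo hi : ℝ} (hba : b ≤ a)
    (heq : a = b → lo = 0 ∧ hi = 0) (hlt : b < a → lo ≤ (a - b) / c ∧ (a - b) / c ≤ hi) :
    lo ≤ (a - b) / c ∧ (a - b) / c ≤ hi := by
  rcases hba.lt_or_eq with h | h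
  · exact hlt h
  · obtain ⟨rfl, rfl⟩ := heq h.symm
    simp [h]

section SortedProfile

variable {n : ℕ} {π : Fin n → ℝ} {σ : Equiv.Perm (Fin n)} {tpi : ℕ → ℝ}

theorem sorted_profile_succ_le (hπnonneg : ∀ k, 0 ≤ π k)
    (hσ : ∀ r s : Fin n, r ≤ s → π (σ s) ≤ π (σ r))
    (htpi : ∀ r : Fin n, tpi (r : ℕ) = π (σ r)) (htpin : tpi n = 0) :
    ∀ j < n, tpi (j + 1) ≤ tpi j := by
  intro j hj
  rw [htpi ⟨j, hj⟩]
  rcases Nat.lt_or_ge (j + 1) n with h | h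
  · exact (htpi ⟨j + 1, h⟩).trans_le (hσ ⟨j, hj⟩ ⟨j + 1, h⟩ (Nat.le_succ j))
  · rw [show j + 1 = n by omega, htpin]
    exact hπnonneg _

theorem sorted_profile_zero_eq_one (hπle : ∀ k, π k ≤ 1) {k : Fin n} (hk : π k = 1)
    (hσ : ∀ r s : Fin n, r ≤ s → π (σ s) ≤ π (σ r))
    (htpi : ∀ r : Fin n, tpi (r : ℕ) = π (σ r)) : tpi 0 = 1 := by
  have hn : 0 < n := k.pos
  refine (htpi ⟨0, hn⟩).trans (le_antisymm (hπle _) ?_)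
  rw [← hk, ← σ.apply_symm_apply k]
  exact hσ ⟨0, hn⟩ (σ.symm k) (Nat.zero_le _)

end SortedProfile

/-- With `π`, `σ`, sorted values `tpi` and the antipignistic vector
`ṗ` as in Statement 5, and gap parameters satisfying `δlo r = δhi r = 0` whenever
`tpi r = tpi (r+1)` and `0 < δlo r ≤ ġ_r ≤ δhi r < 1` (where
`ġ_r = (tpi r − tpi (r+1))/(r+1)`) whenever `tpi r > tpi (r+1)`, the antipignistic
vector `ṗ` belongs to `F^box ∩ ℝ^n_{++}`; in particular `F^box` is nonempty. -/
theorem stmt_8 (n : ℕ) (π : Fin n → ℝ)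
    (hπpos : ∀ k, 0 < π k) (hπle : ∀ k, π k ≤ 1) (hπnorm : ∃ k, π k = 1)
    (σ : Equiv.Perm (Fin n))
    (hσ : ∀ r s : Fin n, r ≤ s → π (σ s) ≤ π (σ r))
    (tpi : ℕ → ℝ)
    (htpi : ∀ r : Fin n, tpi (r : ℕ) = π (σ r)) (htpin : tpi n = 0)
    (pdot : Fin n → ℝ)
    (hpdot : ∀ r : Fin n,
        pdot (σ r) = ∑ j ∈ Finset.Ico (r : ℕ) n, (tpi j - tpi (j + 1)) / ((j : ℝ) + 1))
    (δlo δhi : ℕ → ℝ)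
    (hgap : ∀ r, r + 1 < n →
      (tpi r = tpi (r + 1) → δlo r = 0 ∧ δhi r = 0) ∧
      (tpi (r + 1) < tpi r →
        0 < δlo r ∧ δlo r ≤ (tpi r - tpi (r + 1)) / ((r : ℝ) + 1) ∧
        (tpi r - tpi (r + 1)) / ((r : ℝ) + 1) ≤ δhi r ∧ δhi r < 1)) :
    pdot ∈ Fbox n π σ δlo δhi ∧ (∀ i, 0 < pdot i) ∧
      (Fbox n π σ δlo δhi).Nonempty := by
  obtain ⟨k, hk⟩ := hπnorm
  have hn : 0 < n := k.pos
  have hp : ∀ r : Fin n, pdot (σ r) = antipignistic tpi n r := hpdot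
  have hmono := sorted_profile_succ_le (fun j => (hπpos j).le) hσ htpi htpin
  have h0 : tpi 0 = 1 := sorted_profile_zero_eq_one hπle hk hσ htpi
  have hlast : tpi n < tpi (n - 1) := by
    rw [htpin, htpi ⟨n - 1, by omega⟩]
    exact hπpos _
  have hpos : ∀ i, 0 < pdot i := by
    intro i
    rw [← σ.apply_symm_apply i, hp]
    exact antipignistic_pos hmono hlast (σ.symm i).isLt
  have hsum : ∑ i, pdot i = 1 := by
    rw [← Equiv.sum_comp σ, sum_congr rfl fun i _ => hp i,
      Fin.sum_univ_eq_sum_range (antipignistic tpi n), sum_range_antipignistic, htpin, h0,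
      sub_zero]
  suffices hmem : pdot ∈ Fbox n π σ δlo δhi from ⟨hmem, hpos, pdot, hmem⟩
  refine ⟨fun i => (hpos i).le, hsum, fun r _ => ?_, fun r hr => ?_⟩
  · rw [sum_congr rfl fun i _ => hp i, sum_univ_filter_val_lt (antipignistic tpi n) r.isLt.le,
      ← htpi r, ← h0]
    exact sub_le_sum_range_antipignistic hmono r.isLt.le
  · rw [hp, hp, Fin.val_mk, Fin.val_mk, antipignistic_sub_succ (Nat.lt_of_succ_lt hr)]
    exact sub_div_bounds_of_cases (hmono r (Nat.lt_of_succ_lt hr)) (hgap r hr).1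
      fun h => ⟨((hgap r hr).2 h).2.1, ((hgap r hr).2 h).2.2.1⟩
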